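/- Let K_0, ..., K_{n−1} (n ≥ 3) be open arcs of a circle C covering C with n minimal, cyclically ordered clockwise, and let A be an open arc with A ⊆ K_i ∪ K_{i+1}. Then A \ ΔK_{i+1} is a connected subset of the circle, where ΔK_{i+1} = K_{i+1} ∩ K_{i+2}. -/

import Mathlib

noncomputable section

/-- The circle, modeled as `ℝ / ℤ`. -/
abbrev Circ : Type := AddCircle (1 : ℝ)

/-- The open arc starting at `a` and running clockwise for length `d`. -/
def arc (a : Circ) (d : ℝ) : Set Circ :=
  (fun t : ℝ => a + (↑t : Circ)) '' Set.Ioo 0 d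

/-- An open (proper) arc of the circle. -/
def IsArc (A : Set Circ) : Prop :=
  ∃ (a : Circ) (d : ℝ), 0 < d ∧ d < 1 ∧ A = arc a d

/-- A chain in `F`: a list of distinct members of `F` with consecutive members
intersecting. -/
def ArcChain (F : Set (Set Circ)) (P : List (Set Circ)) : Prop :=
  P.Nodup ∧ (∀ A ∈ P, A ∈ F) ∧ List.Chain' (fun A B => (A ∩ B).Nonempty) P

/-- A longest chain in `F`. -/
def IsLongestArcChain (F : Set (Set Circ)) (P : List (Set Circ)) : Prop :=
  ArcChain F P ∧ ∀ Q, ArcChain F Q → Q.length ≤ P.length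

/-- The points `p 0, …, p (n-1)` occur consecutively in clockwise order on the circle. -/
def CyclicallyOrdered {n : ℕ} (p : Fin n → Circ) : Prop :=
  ∃ (a : Circ) (t : Fin n → ℝ), StrictMono t ∧ (∀ i, t i ∈ Set.Ico (0 : ℝ) 1) ∧
    ∀ i, p i = a + (↑(t i) : Circ)

/-- The open clockwise arc strictly between the points `p` and `q`. -/
def arcBetween (p q : Circ) : Set Circ :=
  {x | ∃ s u : ℝ, 0 < s ∧ s < u ∧ u < 1 ∧ x = p + (↑s : Circ) ∧ q = p + (↑u : Circ)}

/-- `A` precedes `B` in the list `L`. -/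
def Precedes (L : List (Set Circ)) (A B : Set Circ) : Prop :=
  ∃ i j : ℕ, i < j ∧ j < L.length ∧ L.getD i ∅ = A ∧ L.getD j ∅ = B

/-- `ΔK_i = {x : ℓ(K_{i+1}) < x < r(K_i)}`, for arcs `K i = arc (c i) (d i)`. -/
def deltaK {n : ℕ} [NeZero n] (c : Fin n → Circ) (d : Fin n → ℝ) (i : Fin n) :
    Set Circ :=
  arcBetween (c (i + 1)) (c i + (↑(d i) : Circ))

/-! Parametrize `A` clockwise by an interval of reals. The parameters whose point avoids
`ΔK_{i+1} = K_{i+1} ∩ K_{i+2}` form an order-connected set: a point of `ΔK_{i+1}` moving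
clockwise inside `K_i ∪ K_{i+1}` could leave `K_{i+1}` only through its right endpoint, which
would then lie in `K_i`, and could then leave `K_{i+2}` only through the right endpoint of
`K_{i+2}`, which would then lie in `K_{i+1}`. Both are impossible: in a minimal cover with
cyclically ordered left endpoints, the right endpoint of `K_{j+1}` never lies in `K_j`. Otherwise
`K_j` starts inside `K_{j+1}`, so all other left endpoints lie in `K_{j+1}` too, and the arc
covering the left endpoint of `K_{j+1}` would cover the circle together with `K_{j+1}`. -/

open Set

lemma coe_eq_zero_iff_exists_int {r : ℝ} : (r : Circ) = 0 ↔ ∃ k : ℤ, (k : ℝ) = r := by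
  simp only [AddCircle.coe_eq_zero_iff, zsmul_eq_mul, mul_one]

lemma coe_ne_zero_of_mem_Ioo {r : ℝ} (hr : r ∈ Ioo 0 1) : (r : Circ) ≠ 0 := by
  rintro h
  obtain ⟨k, rfl⟩ := coe_eq_zero_iff_exists_int.1 h
  obtain ⟨h0, h1⟩ := hr
  have : (0 : ℤ) < k := by exact_mod_cast h0
  have : k < 1 := by exact_mod_cast h1
  omega

lemma exists_coe_mem_Ioc (x : Circ) : ∃ y ∈ Ioc (0 : ℝ) 1, (y : Circ) = x :=
  ⟨AddCircle.equivIoc 1 0 x, by simpa using (AddCircle.equivIoc 1 0 x).2, AddCircle.coe_equivIoc⟩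

lemma mem_arc {a x : Circ} {d : ℝ} : x ∈ arc a d ↔ ∃ t ∈ Ioo 0 d, a + t = x := Iff.rfl

lemma self_notMem_arc {a : Circ} {d : ℝ} (hd : d ≤ 1) : a ∉ arc a d := by
  rintro ⟨t, ht, h⟩
  exact coe_ne_zero_of_mem_Ioo ⟨ht.1, ht.2.trans_le hd⟩ (by simpa using h)

lemma add_notMem_arc {a : Circ} {d : ℝ} (hd : d ≤ 1) : a + d ∉ arc a d := by
  intro h
  obtain ⟨t, ⟨ht0, htd⟩, h⟩ := mem_arc.1 h
  refine coe_ne_zero_of_mem_Ioo (r := d - t) ⟨by linarith, by linarith⟩ ?_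
  rw [AddCircle.coe_sub, add_left_cancel h, sub_self]

lemma exists_add_eq_arc_end {a x : Circ} {d s : ℝ} (hx : x ∈ arc a d) (hs : 0 ≤ s)
    (hxs : x + s ∉ arc a d) : ∃ σ ∈ Ioc 0 s, x + σ = a + d := by
  obtain ⟨t, ⟨ht0, htd⟩, rfl⟩ := mem_arc.1 hx
  refine ⟨d - t, ⟨by linarith, ?_⟩, by rw [add_assoc, ← AddCircle.coe_add, add_sub_cancel]⟩
  by_contra! h
  exact hxs (mem_arc.2 ⟨t + s, ⟨by linarith, by linarith⟩, by rw [AddCircle.coe_add, add_assoc]⟩)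

lemma mem_arc_or_arc_subset_of_end_mem {p q : Circ} {d e : ℝ} (h : q + e ∈ arc p d) :
    p ∈ arc q e ∨ arc q e ⊆ arc p d := by
  obtain ⟨w, ⟨hw0, hwd⟩, hpw⟩ := mem_arc.1 h
  have hp : q + ↑(e - w) = p := by
    rw [AddCircle.coe_sub, ← add_sub_assoc, ← hpw, add_sub_cancel_right]
  rcases lt_or_ge 0 (e - w) with hpos | hle
  · exact Or.inl ⟨e - w, ⟨hpos, by linarith⟩, hp⟩
  · right
    intro x hx
    obtain ⟨t, ⟨ht0, hte⟩, rfl⟩ := mem_arc.1 hx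
    refine mem_arc.2 ⟨t - (e - w), ⟨by linarith, by linarith⟩, ?_⟩
    rw [← hp, add_assoc, ← AddCircle.coe_add, add_sub_cancel]

lemma arc_union_arc_eq_univ {q c : Circ} {d e : ℝ} (hc : c ∈ arc q e) (hq : q ∈ arc c d) :
    arc q e ∪ arc c d = univ := by
  obtain ⟨t, ⟨ht0, hte⟩, rfl⟩ := mem_arc.1 hc
  obtain ⟨u, ⟨hu0, hud⟩, hqu⟩ := mem_arc.1 hq
  obtain ⟨k, hk⟩ : ∃ k : ℤ, (k : ℝ) = t + u := coe_eq_zero_iff_exists_int.1 <| by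
    rw [AddCircle.coe_add]; rwa [add_assoc, add_eq_left] at hqu
  have hk1 : (1 : ℝ) ≤ k := by
    have : (0 : ℤ) < k := by exact_mod_cast (show (0 : ℝ) < k by linarith)
    exact_mod_cast this
  refine eq_univ_of_forall fun x => ?_
  obtain ⟨y, ⟨hy0, hy1⟩, hyx⟩ := exists_coe_mem_Ioc (x - q)
  have hx : q + y = x := by rw [hyx]; abel
  rcases lt_or_ge y e with hye | hey
  · exact Or.inl ⟨y, ⟨hy0, hye⟩, hx⟩
  · refine Or.inr (mem_arc.2 ⟨y - t, ⟨by linarith, by linarith⟩, ?_⟩)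
    rw [← hx, add_assoc, ← AddCircle.coe_add, add_sub_cancel]

lemma arcBetween_subset_arc {p q : Circ} {e : ℝ} (hp : p ∈ arc q e) :
    arcBetween q p ⊆ arc q e := by
  obtain ⟨t, ⟨ht0, hte⟩, rfl⟩ := mem_arc.1 hp
  rintro _ ⟨s, u, hs0, hsu, hu1, rfl, htu⟩
  obtain ⟨k, hk⟩ : ∃ k : ℤ, (k : ℝ) = t - u := coe_eq_zero_iff_exists_int.1 <| by
    rw [AddCircle.coe_sub, add_left_cancel htu, sub_self]
  have hk0 : (0 : ℝ) ≤ k := by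
    have : (-1 : ℤ) < k := by exact_mod_cast (show (-1 : ℝ) < k by linarith)
    exact_mod_cast (show (0 : ℤ) ≤ k by omega)
  refine mem_arc.2 ⟨s + k, ⟨by linarith, by linarith⟩, ?_⟩
  rw [hk, add_sub, AddCircle.coe_sub, AddCircle.coe_add, add_left_cancel htu,
    add_sub_cancel_right]

lemma add_mem_arc_inter_of_forall_mem {W : Set Circ} {u v x : Circ} {du dv s : ℝ}
    (hdu : du ≤ 1) (hW : u + du ∉ W) (hV : v + dv ∉ arc u du) (hx : x ∈ arc u du ∩ arc v dv)
    (hs : 0 ≤ s) (hpath : ∀ σ ∈ Ioc 0 s, x + σ ∈ W ∪ arc u du) : x + s ∈ arc u du ∩ arc v dv := by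
  have hU : ∀ σ ∈ Icc 0 s, x + σ ∈ arc u du := by
    rintro σ ⟨hσ0, hσs⟩
    by_contra hσ
    obtain ⟨τ, ⟨hτ0, hτσ⟩, hτ⟩ := exists_add_eq_arc_end hx.1 hσ0 hσ
    rcases hpath τ ⟨hτ0, hτσ.trans hσs⟩ with h | h <;> rw [hτ] at h
    · exact hW h
    · exact add_notMem_arc hdu h
  refine ⟨hU s ⟨hs, le_rfl⟩, ?_⟩
  by_contra hsV
  obtain ⟨τ, ⟨hτ0, hτs⟩, hτ⟩ := exists_add_eq_arc_end hx.2 hs hsV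
  exact hV (hτ ▸ hU τ ⟨hτ0.le, hτs⟩)

def IsMinimalCover {α : Type*} {n : ℕ} (K : Fin n → Set α) : Prop :=
  (⋃ i, K i) = univ ∧ ∀ (m : ℕ) (K' : Fin m → Set α), (∀ j, ∃ i, K' j = K i) →
    (⋃ j, K' j) = univ → n ≤ m

namespace IsMinimalCover

variable {α : Type*} {n : ℕ} {K : Fin n → Set α}

lemma le_card (hK : IsMinimalCover K) {ι : Type*} [Fintype ι] (g : ι → Fin n)
    (hg : (⋃ x, K (g x)) = univ) : n ≤ Fintype.card ι :=
  hK.2 _ (fun j => K (g ((Fintype.equivFin ι).symm j))) (fun _ => ⟨_, rfl⟩) <| by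
    rwa [(Fintype.equivFin ι).symm.surjective.iUnion_comp (fun x => K (g x))]

lemma not_subset (hK : IsMinimalCover K) {a b : Fin n} (hab : a ≠ b) : ¬ K a ⊆ K b := by
  intro hsub
  have hcard := hK.le_card (fun m : {m // m ≠ a} => m.1) <| eq_univ_of_forall fun x => by
    obtain ⟨m, hm⟩ := mem_iUnion.1 (hK.1.symm ▸ mem_univ x)
    by_cases hma : m = a
    · exact mem_iUnion.2 ⟨⟨b, hab.symm⟩, hsub (hma ▸ hm)⟩
    · exact mem_iUnion.2 ⟨⟨m, hma⟩, hm⟩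
  simp only [ne_eq, Fintype.card_subtype_compl, Fintype.card_fin, Fintype.card_unique] at hcard
  omega

lemma union_ne_univ (hK : IsMinimalCover K) (hn : 3 ≤ n) (a b : Fin n) : K a ∪ K b ≠ univ := by
  intro h
  have hcard := hK.le_card ![a, b] (by rw [← h]; ext; simp [Fin.exists_fin_two])
  rw [Fintype.card_fin] at hcard
  omega

end IsMinimalCover

lemma CyclicallyOrdered.mem_arcBetween {n : ℕ} [NeZero n] {c : Fin n → Circ}
    (hc : CyclicallyOrdered c) {j m : Fin n} (hmj : m ≠ j) (hm : m ≠ j + 1) :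
    c m ∈ arcBetween (c (j + 1)) (c j) := by
  obtain ⟨a, t, ht, ht01, hct⟩ := hc
  have hlt : ∀ {x y : Fin n}, x.val < y.val → t x < t y := fun h => ht (Fin.lt_def.2 h)
  have hsucc : (j + 1 : Fin n).val = (j.val + 1) % n := by
    rw [Fin.val_add, Fin.val_one', Nat.add_mod_mod]
  have hshift : ∀ x y : ℝ, a + (y : Circ) = a + x + ↑(y - x) := fun x y => by
    rw [AddCircle.coe_sub]; abel
  have hshift' : ∀ x y : ℝ, a + (y : Circ) = a + x + ↑(y - x + 1) := fun x y => by
    rw [AddCircle.coe_add_period]; exact hshift x y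
  have hmv : m.val ≠ j.val := Fin.val_ne_iff.2 hmj
  have hmv' : m.val ≠ (j + 1 : Fin n).val := Fin.val_ne_iff.2 hm
  rw [hct, hct, hct]
  obtain ⟨hj0, hj1⟩ := ht01 j
  obtain ⟨hm0, hm1⟩ := ht01 m
  obtain ⟨hk0, hk1⟩ := ht01 (j + 1)
  have hbetween : (j.val < (j + 1 : Fin n).val ∧ (j + 1 : Fin n).val < m.val) ∨
      (m.val < j.val ∧ j.val < (j + 1 : Fin n).val) ∨
      ((j + 1 : Fin n).val < m.val ∧ m.val < j.val) := by
    rcases (Nat.lt_or_ge (j.val + 1) n) with h | h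
    · rw [Nat.mod_eq_of_lt h] at hsucc; omega
    · rw [show j.val + 1 = n by omega, Nat.mod_self] at hsucc; omega
  rcases hbetween with ⟨h1, h2⟩ | ⟨h1, h2⟩ | ⟨h1, h2⟩
  · exact ⟨_, _, by linarith [hlt h2], by linarith, by linarith [hlt h1],
      hshift _ _, hshift' _ _⟩
  · exact ⟨_, _, by linarith, by linarith [hlt h1], by linarith [hlt h2],
      hshift' _ _, hshift' _ _⟩
  · exact ⟨_, _, by linarith [hlt h1], by linarith [hlt h2], by linarith,
      hshift _ _, hshift _ _⟩

lemma arc_end_succ_notMem {n : ℕ} [NeZero n] (hn : 3 ≤ n) {c : Fin n → Circ} {d : Fin n → ℝ}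
    (hK : IsMinimalCover fun j => arc (c j) (d j)) (hd : ∀ j, d j ≤ 1)
    (hc : CyclicallyOrdered c) (j : Fin n) : c (j + 1) + d (j + 1) ∉ arc (c j) (d j) := by
  intro hend
  have hj : j + 1 ≠ j := by
    rw [Ne, add_eq_left, Fin.one_eq_zero_iff]; omega
  have hstart : c j ∈ arc (c (j + 1)) (d (j + 1)) :=
    (mem_arc_or_arc_subset_of_end_mem hend).resolve_right (hK.not_subset hj)
  obtain ⟨m, hm⟩ := mem_iUnion.1 (hK.1.symm ▸ mem_univ (c (j + 1)))
  have hcm : c m ∈ arc (c (j + 1)) (d (j + 1)) := by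
    by_cases hmj : m = j
    · rwa [hmj]
    by_cases hmk : m = j + 1
    · exact absurd (hmk ▸ hm) (self_notMem_arc (hd _))
    exact arcBetween_subset_arc hstart (hc.mem_arcBetween hmj hmk)
  exact hK.union_ne_univ hn (j + 1) m (arc_union_arc_eq_univ hcm hm)

lemma isPreconnected_arc_diff_of_forall_add_mem {a : Circ} {l : ℝ} {B : Set Circ}
    (hB : ∀ x ∈ B, ∀ s : ℝ, 0 ≤ s → (∀ σ ∈ Ioc 0 s, x + σ ∈ arc a l) → x + s ∈ B) :
    IsPreconnected (arc a l \ B) := by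
  set f : ℝ → Circ := fun τ => a + τ
  have hf : ∀ τ σ : ℝ, f τ + σ = f (τ + σ) := fun τ σ => by
    simp only [f, AddCircle.coe_add, add_assoc]
  have hS : (Ioo 0 l ∩ f ⁻¹' Bᶜ).OrdConnected := by
    refine ⟨fun p hp q hq u hu =>
      ⟨⟨hp.1.1.trans_le hu.1, hu.2.trans_lt hq.1.2⟩, fun hu' => hq.2 ?_⟩⟩
    have h := hB _ hu' (q - u) (sub_nonneg.2 hu.2) fun σ hσ => by
      rw [hf]
      exact ⟨u + σ, ⟨by linarith [hp.1.1, hu.1, hσ.1], by linarith [hq.1.2, hσ.2]⟩, rfl⟩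
    rwa [hf, add_sub_cancel] at h
  have himg : arc a l \ B = f '' (Ioo 0 l ∩ f ⁻¹' Bᶜ) := by
    rw [image_inter_preimage, Set.sdiff_eq]; rfl
  rw [himg]
  exact hS.isPreconnected.image f (by fun_prop)

/-- For a minimal circle cover `K_0, …, K_{n-1}` (`n ≥ 3`), cyclically ordered clockwise,
and an open arc `A ⊆ K i ∪ K (i+1)`, the set `A \ ΔK_{i+1}` (where
`ΔK_{i+1} = K_{i+1} ∩ K_{i+2}`) is a connected subset of the circle. -/
theorem stmt8 (n : ℕ) [NeZero n] (hn : 3 ≤ n) (K : Fin n → Set Circ)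
    (c : Fin n → Circ) (d : Fin n → ℝ)
    (hKarc : ∀ i, K i = arc (c i) (d i) ∧ 0 < d i ∧ d i < 1)
    (hKcov : (⋃ i, K i) = Set.univ)
    (hmin : ∀ (m : ℕ) (K' : Fin m → Set Circ), (∀ j, ∃ i, K' j = K i) →
      (⋃ j, K' j) = Set.univ → n ≤ m)
    (hord : CyclicallyOrdered c)
    (A : Set Circ) (hA : IsArc A) (i : Fin n) (hsub : A ⊆ K i ∪ K (i + 1)) :
    IsPreconnected (A \ (K (i + 1) ∩ K (i + 2))) := by
  obtain rfl : K = fun j => arc (c j) (d j) := funext fun j => (hKarc j).1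
  have hd : ∀ j, d j ≤ 1 := fun j => (hKarc j).2.2.le
  have hend := arc_end_succ_notMem hn ⟨hKcov, hmin⟩ hd hord
  have hend' : c (i + 2) + d (i + 2) ∉ arc (c (i + 1)) (d (i + 1)) := by
    have h2 : i + 1 + 1 = i + 2 := by simp [add_assoc, Fin.ext_iff, Fin.val_add]
    simpa only [h2] using hend (i + 1)
  obtain ⟨a, l, -, -, rfl⟩ := hA
  exact isPreconnected_arc_diff_of_forall_add_mem fun x hx s hs hpath =>
    add_mem_arc_inter_of_forall_mem (hd _) (hend i) hend' hx hs fun σ hσ => hsub (hpath σ hσ)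

end
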